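/- Let f : I ⊆ (0,∞) → (0,∞) be differentiable on I°, let a, b ∈ I° with a < b, f' integrable on [a,b], and suppose |f'|^q is s-geometrically convex on [a,b] for some q > 1 and s ∈ (0,1]. If |f'(b)| ≤ 1 ≤ |f'(a)|, then |(f(a)+f(b))/2 − (1/(ln b − ln a)) ∫_a^b f(x)/x dx| ≤ (1/2) ln(b/a) · ((q−1)/(2q−1))^{1−1/q} · [ a|f'(a)| g₂(θ₁)^{1/q} + b|f'(b)|^s |f'(a)|^{1−s} g₂(θ₂)^{1/q} ]. -/

import Mathlib

open Real MeasureTheory Set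

/-- `g` is `s`-geometrically convex on `J`. -/
def SGeometricallyConvexOn (s : ℝ) (J : Set ℝ) (g : ℝ → ℝ) : Prop :=
  ∀ x ∈ J, ∀ y ∈ J, ∀ t ∈ Set.Icc (0:ℝ) 1,
    g (x ^ t * y ^ (1 - t)) ≤ g x ^ t ^ s * g y ^ (1 - t) ^ s

noncomputable def g₁ (u : ℝ) : ℝ :=
  if u = 1 then 1/2 else (u * Real.log u - u + 1) / (Real.log u) ^ 2

noncomputable def g₂ (u : ℝ) : ℝ :=
  if u = 1 then 1 else (u - 1) / Real.log u

/-
Integrating by parts, the left-hand side is `|(1/L) ∫ₐᵇ (log x - (log a + log b)/2) f'(x) dx|`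
with `L = log b - log a`. Hölder's inequality for the measure `dx/x` bounds it by
`(∫ |log x - (log a + log b)/2|^p dx/x)^(1/p) (∫ (x |f'(x)|)^q dx/x)^(1/q)`, and the first factor
is computed exactly. Write `x = a^t b^(1-t)`. By s-geometric convexity, `t^s ≤ 1 - s + s t`,
`s (1 - t) ≤ (1 - t)^s` and `|f'(b)| ≤ 1 ≤ |f'(a)|`, we get
`x |f'(x)| ≤ |f'(a)|^(1-s) A^t B^(1-t)` with `A = a |f'(a)|^s`, `B = b |f'(b)|^s`.
Since `dx/x = L dt` and `∫₀¹ θ^t dt = g₂ θ`, the second factor is at most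
`(L (|f'(a)|^(1-s) B)^q g₂ θ₂)^(1/q)`. This gives the bound with the second summand alone, and the
first summand is nonnegative.
-/

lemma g₂_nonneg {u : ℝ} (hu : 0 ≤ u) : 0 ≤ g₂ u := by
  unfold g₂
  split_ifs with h
  · norm_num
  rcases lt_or_gt_of_ne h with h1 | h1
  · exact div_nonneg_of_nonpos (by linarith) (Real.log_nonpos hu h1.le)
  · exact div_nonneg (by linarith) (Real.log_nonneg h1.le)

lemma integral_rpow_eq_g₂ {θ : ℝ} (hθ : 0 < θ) : ∫ t in (0 : ℝ)..1, θ ^ t = g₂ θ := by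
  by_cases h1 : θ = 1
  · simp [h1, g₂]
  have hlog : Real.log θ ≠ 0 := Real.log_ne_zero_of_pos_of_ne_one hθ h1
  have hderiv : ∀ t ∈ uIcc (0 : ℝ) 1, HasDerivAt (fun t => θ ^ t / Real.log θ) (θ ^ t) t := by
    intro t _
    simpa [hlog] using ((Real.hasStrictDerivAt_const_rpow hθ t).hasDerivAt.div_const (Real.log θ))
  rw [intervalIntegral.integral_eq_sub_of_hasDerivAt hderiv
    ((Real.continuous_const_rpow hθ.ne').intervalIntegrable _ _)]
  simp [g₂, h1, sub_div]

lemma integral_abs_rpow_symm {c p : ℝ} (hc : 0 ≤ c) (hp : 0 ≤ p) :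
    ∫ x in -c..c, |x| ^ p = 2 * (c ^ (p + 1) / (p + 1)) := by
  have hcont : Continuous fun x : ℝ => |x| ^ p := continuous_abs.rpow_const fun _ => Or.inr hp
  have hhalf : ∫ x in (0 : ℝ)..c, |x| ^ p = c ^ (p + 1) / (p + 1) := by
    rw [intervalIntegral.integral_congr (g := fun x => x ^ p) fun x hx => by
      rw [uIcc_of_le hc] at hx; simp [abs_of_nonneg hx.1]]
    simp [integral_rpow (Or.inl (by linarith : (-1 : ℝ) < p)),
      Real.zero_rpow (by linarith : p + 1 ≠ 0)]
  rw [← intervalIntegral.integral_add_adjacent_intervals (b := 0) (hcont.intervalIntegrable _ _)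
    (hcont.intervalIntegrable _ _), hhalf]
  have hneg : ∫ x in -c..0, |x| ^ p = ∫ x in (0 : ℝ)..c, |x| ^ p := by
    simpa using (intervalIntegral.integral_comp_neg (a := 0) (b := c) fun x : ℝ => |x| ^ p).symm
  rw [hneg, hhalf]; ring

/-- The exponent `t` with `x = a ^ t * b ^ (1 - t)`. -/
noncomputable def logParam (a b x : ℝ) : ℝ := (Real.log b - Real.log x) / (Real.log b - Real.log a)

section logParam

variable {a b x : ℝ}

lemma logParam_mem_Icc (ha : 0 < a) (hx : x ∈ Icc a b) : logParam a b x ∈ Icc 0 1 := by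
  have hx0 := ha.trans_le hx.1
  have hlogx := Real.log_le_log ha hx.1
  have hlogb := Real.log_le_log hx0 hx.2
  exact ⟨div_nonneg (by linarith) (by linarith), div_le_one_of_le₀ (by linarith) (by linarith)⟩

lemma rpow_logParam_mul_rpow_one_sub (ha : 0 < a) (hb : 0 < b) (hab : a ≠ b) (hx : 0 < x) :
    a ^ logParam a b x * b ^ (1 - logParam a b x) = x := by
  have hL : Real.log b - Real.log a ≠ 0 :=
    sub_ne_zero.2 fun h => hab (Real.log_injOn_pos hb ha h).symm
  rw [Real.rpow_def_of_pos ha, Real.rpow_def_of_pos hb, ← Real.exp_add, logParam]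
  conv_rhs => rw [← Real.exp_log hx]
  congr 1
  field_simp
  ring

lemma log_sub_logMid_eq (ha : 0 < a) (hb : 0 < b) (hab : a ≠ b) :
    Real.log x - (Real.log a + Real.log b) / 2
      = (Real.log b - Real.log a) * (1 / 2 - logParam a b x) := by
  have hL : Real.log b - Real.log a ≠ 0 :=
    sub_ne_zero.2 fun h => hab (Real.log_injOn_pos hb ha h).symm
  rw [logParam]
  field_simp
  ring

lemma integral_comp_logParam_mul_inv (ha : 0 < a) (hab : a < b) {φ : ℝ → ℝ}
    (hφ : Continuous φ) :
    ∫ x in a..b, φ (logParam a b x) * x⁻¹ = (Real.log b - Real.log a) * ∫ t in (0 : ℝ)..1, φ t := by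
  set L := Real.log b - Real.log a
  have hL : L ≠ 0 := (sub_pos.2 (Real.log_lt_log ha hab)).ne'
  have hpos : ∀ x ∈ uIcc a b, 0 < x := fun x hx => ha.trans_le (uIcc_of_le hab.le ▸ hx).1
  have hderiv : ∀ x ∈ uIcc a b, HasDerivAt (logParam a b) (-x⁻¹ / L) x := fun x hx =>
    ((Real.hasDerivAt_log (hpos x hx).ne').const_sub _).div_const L
  have hcont : ContinuousOn (fun x => -x⁻¹ / L) (uIcc a b) :=
    ((continuousOn_inv₀.mono fun x hx => (hpos x hx).ne').neg).div_const L
  have hsub := intervalIntegral.integral_comp_mul_deriv hderiv hcont hφ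
  have ha' : logParam a b a = 1 := div_self hL
  have hb' : logParam a b b = 0 := by simp [logParam]
  rw [ha', hb', intervalIntegral.integral_symm (0 : ℝ) 1] at hsub
  have hscale : ∀ x, φ (logParam a b x) * x⁻¹ = -L * ((φ ∘ logParam a b) x * (-x⁻¹ / L)) := by
    intro x; rw [Function.comp_apply]; field_simp
  rw [intervalIntegral.integral_congr fun x _ => hscale x, intervalIntegral.integral_const_mul,
    hsub]
  ring

lemma integrableOn_comp_logParam_mul_inv (ha : 0 < a) {φ : ℝ → ℝ}
    (hφ : Continuous φ) : IntegrableOn (fun x => φ (logParam a b x) * x⁻¹) (Ioc a b) := by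
  have hne : ∀ x ∈ Icc a b, x ≠ 0 := fun x hx => (ha.trans_le hx.1).ne'
  exact ((hφ.comp_continuousOn ((continuousOn_const.sub (Real.continuousOn_log.mono
    fun x hx => hne x hx)).div_const _)).mul (continuousOn_inv₀.mono hne)).integrableOn_Icc.mono_set
    Ioc_subset_Icc_self

end logParam

lemma integral_abs_log_sub_logMid_rpow_mul_inv {a b p : ℝ} (ha : 0 < a) (hab : a < b)
    (hp : 0 ≤ p) :
    ∫ x in a..b, |Real.log x - (Real.log a + Real.log b) / 2| ^ p * x⁻¹
      = ((Real.log b - Real.log a) / 2) ^ p * ((Real.log b - Real.log a) / (p + 1)) := by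
  have hL : 0 < Real.log b - Real.log a := sub_pos.2 (Real.log_lt_log ha hab)
  have hφ : Continuous fun t : ℝ => |(Real.log b - Real.log a) * (1 / 2 - t)| ^ p :=
    (continuous_const.mul (continuous_const.sub continuous_id)).abs.rpow_const fun _ => Or.inr hp
  have hint : ∫ t in (0 : ℝ)..1, |t - 1 / 2| ^ p = (1 / 2) ^ p / (p + 1) := by
    rw [intervalIntegral.integral_comp_sub_right (fun t : ℝ => |t| ^ p),
      show (0 : ℝ) - 1 / 2 = -(1 / 2) by norm_num, show (1 : ℝ) - 1 / 2 = 1 / 2 by norm_num,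
      integral_abs_rpow_symm (by norm_num) hp, Real.rpow_add_one (by norm_num)]
    ring
  rw [intervalIntegral.integral_congr fun x _ => by rw [log_sub_logMid_eq ha (ha.trans hab) hab.ne],
    integral_comp_logParam_mul_inv ha hab hφ]
  simp_rw [abs_mul, abs_sub_comm (1 / 2 : ℝ), Real.mul_rpow (abs_nonneg _) (abs_nonneg _),
    intervalIntegral.integral_const_mul, hint, abs_of_pos hL,
    Real.div_rpow hL.le (by norm_num : (0 : ℝ) ≤ 2), Real.div_rpow (by norm_num : (0 : ℝ) ≤ 1)
      (by norm_num : (0 : ℝ) ≤ 2), Real.one_rpow]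
  field_simp

lemma rpow_mul_rpow_one_sub_eq {A B t : ℝ} (hA : 0 ≤ A) (hB : 0 < B) :
    A ^ t * B ^ (1 - t) = B * (A / B) ^ t := by
  rw [Real.rpow_sub hB, Real.rpow_one, Real.div_rpow hA hB.le]
  field_simp

lemma continuous_mul_rpow_mul_rpow_one_sub_rpow {A B Y q : ℝ} (hA : 0 < A) (hB : 0 < B)
    (hq : 0 ≤ q) : Continuous fun t : ℝ => (Y * (A ^ t * B ^ (1 - t))) ^ q :=
  (continuous_const.mul ((Real.continuous_const_rpow hA.ne').mul
    ((Real.continuous_const_rpow hB.ne').comp (continuous_const.sub continuous_id)))).rpow_const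
    fun _ => Or.inr hq

lemma integral_rpow_logParam_mul_inv {a b q A B Y : ℝ} (ha : 0 < a) (hab : a < b) (hq : 0 ≤ q)
    (hY : 0 ≤ Y) (hA : 0 < A) (hB : 0 < B) :
    ∫ x in a..b, (Y * (A ^ logParam a b x * B ^ (1 - logParam a b x))) ^ q * x⁻¹
      = (Real.log b - Real.log a) * ((Y * B) ^ q * g₂ ((A / B) ^ q)) := by
  have hAB : 0 < A / B := div_pos hA hB
  have hpt : ∀ t : ℝ, (Y * (A ^ t * B ^ (1 - t))) ^ q = (Y * B) ^ q * ((A / B) ^ q) ^ t := by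
    intro t
    rw [rpow_mul_rpow_one_sub_eq hA.le hB, ← mul_assoc,
      Real.mul_rpow (mul_nonneg hY hB.le) (Real.rpow_nonneg hAB.le _), ← Real.rpow_mul hAB.le,
      ← Real.rpow_mul hAB.le, mul_comm t]
  rw [integral_comp_logParam_mul_inv ha hab
    (continuous_mul_rpow_mul_rpow_one_sub_rpow hA hB hq)]
  simp_rw [hpt, intervalIntegral.integral_const_mul,
    integral_rpow_eq_g₂ (Real.rpow_pos_of_pos hAB q)]

lemma rpow_rpow_mul_rpow_rpow_le {α β s t : ℝ} (hα : 1 ≤ α) (hβ0 : 0 ≤ β) (hβ1 : β ≤ 1)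
    (hs : s ∈ Ioc 0 1) (ht : t ∈ Icc 0 1) :
    α ^ t ^ s * β ^ (1 - t) ^ s ≤ α ^ (1 - s) * (α ^ t * β ^ (1 - t)) ^ s := by
  obtain ⟨hs0, hs1⟩ := hs
  obtain ⟨ht0, ht1⟩ := ht
  have hconcave : t ^ s ≤ 1 - s + t * s := by
    have := rpow_one_add_le_one_add_mul_self (s := t - 1) (by linarith) hs0.le hs1
    rw [add_sub_cancel] at this
    linarith
  have hlower : (1 - t) * s ≤ (1 - t) ^ s := by
    have := Real.rpow_le_rpow_of_exponent_ge' (x := 1 - t) (by linarith) (by linarith) hs0.le hs1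
    rw [Real.rpow_one] at this
    nlinarith
  rw [Real.mul_rpow (Real.rpow_nonneg (by linarith) _) (Real.rpow_nonneg hβ0 _),
    ← Real.rpow_mul (by linarith), ← Real.rpow_mul hβ0, ← mul_assoc,
    ← Real.rpow_add (by linarith)]
  exact mul_le_mul (Real.rpow_le_rpow_of_exponent_le hα hconcave)
    (Real.rpow_le_rpow_of_exponent_ge' hβ0 hβ1 (by nlinarith) hlower)
    (Real.rpow_nonneg hβ0 _) (Real.rpow_nonneg (by linarith) _)

lemma rpow_mul_rpow_one_sub_mul_rpow {a b α β s t : ℝ} (ha : 0 ≤ a) (hb : 0 ≤ b) (hα : 0 ≤ α)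
    (hβ : 0 ≤ β) :
    a ^ t * b ^ (1 - t) * (α ^ t * β ^ (1 - t)) ^ s
      = (a * α ^ s) ^ t * (b * β ^ s) ^ (1 - t) := by
  rw [Real.mul_rpow (Real.rpow_nonneg hα _) (Real.rpow_nonneg hβ _),
    Real.mul_rpow ha (Real.rpow_nonneg hα _), Real.mul_rpow hb (Real.rpow_nonneg hβ _),
    ← Real.rpow_mul hα, ← Real.rpow_mul hα, ← Real.rpow_mul hβ, ← Real.rpow_mul hβ,
    mul_comm t, mul_comm (1 - t)]
  ring

lemma SGeometricallyConvexOn.mul_le_of_one_le_of_le_one {u : ℝ → ℝ} {a b q s x : ℝ}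
    (hconv : SGeometricallyConvexOn s (Icc a b) fun x => u x ^ q) (ha : 0 < a) (hab : a < b)
    (hq : 0 < q) (hs : s ∈ Ioc 0 1) (hu : ∀ x ∈ Icc a b, 0 ≤ u x) (hua : 1 ≤ u a)
    (hub : u b ≤ 1) (hx : x ∈ Icc a b) :
    x * u x ≤ u a ^ (1 - s) *
      ((a * u a ^ s) ^ logParam a b x * (b * u b ^ s) ^ (1 - logParam a b x)) := by
  set t := logParam a b x
  have ht := logParam_mem_Icc ha hx
  have hb := ha.trans hab
  have hxt : a ^ t * b ^ (1 - t) = x :=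
    rpow_logParam_mul_rpow_one_sub ha hb hab.ne (ha.trans_le hx.1)
  have hu0 : 0 ≤ u a := zero_le_one.trans hua
  have hub0 : 0 ≤ u b := hu b ⟨hab.le, le_rfl⟩
  have hc := hconv a ⟨le_rfl, hab.le⟩ b ⟨hab.le, le_rfl⟩ t ht
  rw [hxt, ← Real.rpow_mul hu0, ← Real.rpow_mul hub0, mul_comm q, mul_comm q, Real.rpow_mul hu0,
    Real.rpow_mul hub0, ← Real.mul_rpow (Real.rpow_nonneg hu0 _) (Real.rpow_nonneg hub0 _)] at hc
  have hux : u x ≤ u a ^ t ^ s * u b ^ (1 - t) ^ s :=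
    (Real.rpow_le_rpow_iff (hu x hx) (by positivity) hq).1 hc
  calc x * u x ≤ (a ^ t * b ^ (1 - t)) * (u a ^ (1 - s) * (u a ^ t * u b ^ (1 - t)) ^ s) := by
        rw [hxt]
        exact mul_le_mul_of_nonneg_left
          (hux.trans (rpow_rpow_mul_rpow_rpow_le hua hub0 hub hs ht)) (ha.le.trans hx.1)
    _ = _ := by
        rw [mul_left_comm, ← rpow_mul_rpow_one_sub_mul_rpow ha.le hb.le hu0 hub0]

lemma SGeometricallyConvexOn.eq_zero_of_right_eq_zero {g : ℝ → ℝ} {a b s x : ℝ}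
    (hconv : SGeometricallyConvexOn s (Icc a b) g) (ha : 0 < a) (hab : a < b)
    (hg : ∀ x ∈ Icc a b, 0 ≤ g x) (hgb : g b = 0) (hx : x ∈ Ioc a b) : g x = 0 := by
  have hx' : x ∈ Icc a b := Ioc_subset_Icc_self hx
  have ht := logParam_mem_Icc ha hx'
  have ht1 : logParam a b x < 1 :=
    (div_lt_one (sub_pos.2 (Real.log_lt_log ha hab))).2
      (by linarith [Real.log_lt_log ha hx.1])
  have hc := hconv a ⟨le_rfl, hab.le⟩ b ⟨hab.le, le_rfl⟩ _ ht
  rw [rpow_logParam_mul_rpow_one_sub ha (ha.trans hab) hab.ne (ha.trans hx.1), hgb,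
    Real.zero_rpow (Real.rpow_pos_of_pos (sub_pos.2 ht1) s).ne', mul_zero] at hc
  exact le_antisymm hc (hg x hx')

section convexityBound

variable {u : ℝ → ℝ} {a b q s : ℝ}

lemma SGeometricallyConvexOn.rpow_mul_inv_le
    (hconv : SGeometricallyConvexOn s (Icc a b) fun x => u x ^ q) (ha : 0 < a) (hab : a < b)
    (hq : 0 < q) (hs : s ∈ Ioc 0 1) (hu : ∀ x ∈ Icc a b, 0 ≤ u x) (hua : 1 ≤ u a)
    (hub : u b ≤ 1) {x : ℝ} (hx : x ∈ Icc a b) :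
    (x * u x) ^ q * x⁻¹ ≤ (u a ^ (1 - s) *
      ((a * u a ^ s) ^ logParam a b x * (b * u b ^ s) ^ (1 - logParam a b x))) ^ q * x⁻¹ :=
  mul_le_mul_of_nonneg_right
    (Real.rpow_le_rpow (mul_nonneg (ha.le.trans hx.1) (hu x hx))
      (hconv.mul_le_of_one_le_of_le_one ha hab hq hs hu hua hub hx) hq.le)
    (inv_nonneg.2 (ha.le.trans hx.1))

lemma SGeometricallyConvexOn.integrableOn_rpow_mul_inv
    (hconv : SGeometricallyConvexOn s (Icc a b) fun x => u x ^ q) (ha : 0 < a) (hab : a < b)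
    (hq : 0 < q) (hs : s ∈ Ioc 0 1) (hu : ∀ x ∈ Icc a b, 0 ≤ u x) (hua : 1 ≤ u a)
    (hub0 : 0 < u b) (hub : u b ≤ 1) (hmeas : AEStronglyMeasurable u (volume.restrict (Ioc a b))) :
    IntegrableOn (fun x => (x * u x) ^ q * x⁻¹) (Ioc a b) := by
  have hmaj := integrableOn_comp_logParam_mul_inv (b := b) ha
    (continuous_mul_rpow_mul_rpow_one_sub_rpow (Y := u a ^ (1 - s))
      (mul_pos ha (Real.rpow_pos_of_pos (zero_lt_one.trans_le hua) s))
      (mul_pos (ha.trans hab) (Real.rpow_pos_of_pos hub0 s)) hq.le)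
  refine hmaj.mono' ((((measurable_id.aemeasurable.mul hmeas.aemeasurable).pow_const q).mul
    measurable_inv.aemeasurable).aestronglyMeasurable) ((ae_restrict_iff' measurableSet_Ioc).2
    (Filter.Eventually.of_forall fun x hx => ?_))
  have hx' := Ioc_subset_Icc_self hx
  have hx0 : 0 < x := ha.trans hx.1
  rw [Real.norm_of_nonneg (by have := hu x hx'; positivity)]
  exact hconv.rpow_mul_inv_le ha hab hq hs hu hua hub hx'

lemma SGeometricallyConvexOn.setIntegral_rpow_mul_inv_le
    (hconv : SGeometricallyConvexOn s (Icc a b) fun x => u x ^ q) (ha : 0 < a) (hab : a < b)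
    (hq : 0 < q) (hs : s ∈ Ioc 0 1) (hu : ∀ x ∈ Icc a b, 0 ≤ u x) (hua : 1 ≤ u a)
    (hub0 : 0 < u b) (hub : u b ≤ 1) :
    ∫ x in Ioc a b, (x * u x) ^ q * x⁻¹ ≤ (Real.log b - Real.log a) *
      ((u a ^ (1 - s) * (b * u b ^ s)) ^ q * g₂ ((a * u a ^ s / (b * u b ^ s)) ^ q)) := by
  have hA : 0 < a * u a ^ s := mul_pos ha (Real.rpow_pos_of_pos (zero_lt_one.trans_le hua) s)
  have hB : 0 < b * u b ^ s := mul_pos (ha.trans hab) (Real.rpow_pos_of_pos hub0 s)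
  have hY : 0 ≤ u a ^ (1 - s) := Real.rpow_nonneg (zero_le_one.trans hua) _
  rw [← integral_rpow_logParam_mul_inv ha hab hq.le hY hA hB,
    intervalIntegral.integral_of_le hab.le]
  refine integral_mono_of_nonneg ?_ ?_ ((ae_restrict_iff' measurableSet_Ioc).2
    (Filter.Eventually.of_forall fun x hx =>
      hconv.rpow_mul_inv_le ha hab hq hs hu hua hub (Ioc_subset_Icc_self hx)))
  · refine (ae_restrict_iff' measurableSet_Ioc).2 (Filter.Eventually.of_forall fun x hx => ?_)
    have hx0 : 0 < x := ha.trans hx.1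
    have := hu x (Ioc_subset_Icc_self hx)
    positivity
  · exact integrableOn_comp_logParam_mul_inv ha
      (continuous_mul_rpow_mul_rpow_one_sub_rpow hA hB hq.le)

end convexityBound

lemma memLp_ofReal_of_integrable_rpow {α : Type*} [MeasurableSpace α] {μ : Measure α} {p : ℝ}
    (hp : 0 < p) {f : α → ℝ} (hf0 : 0 ≤ᵐ[μ] f) (hf : AEStronglyMeasurable f μ)
    (hfp : Integrable (fun x => f x ^ p) μ) : MemLp f (ENNReal.ofReal p) μ := by
  refine (integrable_norm_rpow_iff hf (ENNReal.ofReal_pos.2 hp).ne' ENNReal.ofReal_ne_top).1 ?_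
  rw [ENNReal.toReal_ofReal hp.le]
  exact hfp.congr (hf0.mono fun x hx => by simp only [Real.norm_of_nonneg hx])

lemma integral_mul_mul_le_Lp_mul_Lq_of_nonneg_weight {α : Type*} [MeasurableSpace α]
    {μ : Measure α} {p q : ℝ} (hpq : p.HolderConjugate q) {f g w : α → ℝ}
    (hf0 : 0 ≤ᵐ[μ] f) (hg0 : 0 ≤ᵐ[μ] g) (hw0 : 0 ≤ᵐ[μ] w)
    (hf : AEStronglyMeasurable f μ) (hg : AEStronglyMeasurable g μ)
    (hw : AEStronglyMeasurable w μ)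
    (hfp : Integrable (fun x => f x ^ p * w x) μ) (hgq : Integrable (fun x => g x ^ q * w x) μ) :
    ∫ x, f x * g x * w x ∂μ
      ≤ (∫ x, f x ^ p * w x ∂μ) ^ (1 / p) * (∫ x, g x ^ q * w x ∂μ) ^ (1 / q) := by
  have hpow : ∀ {r : ℝ}, 0 < r → ∀ {h : α → ℝ}, 0 ≤ᵐ[μ] h →
      (fun x => (h x * w x ^ (1 / r)) ^ r) =ᵐ[μ] fun x => h x ^ r * w x := by
    intro r hr h hh0
    filter_upwards [hh0, hw0] with x hx hwx
    rw [Real.mul_rpow hx (Real.rpow_nonneg hwx _), ← Real.rpow_mul hwx, one_div_mul_cancel hr.ne',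
      Real.rpow_one]
  have hwr : ∀ r : ℝ, AEStronglyMeasurable (fun x => w x ^ r) μ := fun r =>
    (hw.aemeasurable.pow_const r).aestronglyMeasurable
  have hF0 : 0 ≤ᵐ[μ] fun x => f x * w x ^ (1 / p) := by
    filter_upwards [hf0, hw0] with x hx hwx using mul_nonneg hx (Real.rpow_nonneg hwx _)
  have hG0 : 0 ≤ᵐ[μ] fun x => g x * w x ^ (1 / q) := by
    filter_upwards [hg0, hw0] with x hx hwx using mul_nonneg hx (Real.rpow_nonneg hwx _)
  have holder := integral_mul_le_Lp_mul_Lq_of_nonneg hpq hF0 hG0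
    (memLp_ofReal_of_integrable_rpow hpq.pos hF0 (hf.mul (hwr _))
      (hfp.congr (hpow hpq.pos hf0).symm))
    (memLp_ofReal_of_integrable_rpow hpq.symm.pos hG0 (hg.mul (hwr _))
      (hgq.congr (hpow hpq.symm.pos hg0).symm))
  rw [integral_congr_ae (hpow hpq.pos hf0), integral_congr_ae (hpow hpq.symm.pos hg0)] at holder
  refine le_of_eq_of_le (integral_congr_ae ?_) holder
  filter_upwards [hw0] with x hwx
  have hexp : 1 / p + 1 / q = 1 := by rw [one_div, one_div, hpq.inv_add_inv_eq_one]
  rw [mul_mul_mul_comm, ← Real.rpow_add' hwx (by rw [hexp]; norm_num), hexp, Real.rpow_one]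

lemma half_add_sub_integral_div_eq {f f' : ℝ → ℝ} {a b : ℝ} (ha : 0 < a) (hab : a < b)
    (hf : ∀ x ∈ Icc a b, HasDerivAt f (f' x) x) (hf' : IntervalIntegrable f' volume a b) :
    (f a + f b) / 2 - 1 / (Real.log b - Real.log a) * ∫ x in a..b, f x / x
      = 1 / (Real.log b - Real.log a) *
        ∫ x in a..b, (Real.log x - (Real.log a + Real.log b) / 2) * f' x := by
  have hL : Real.log b - Real.log a ≠ 0 := (sub_pos.2 (Real.log_lt_log ha hab)).ne'
  have hne : ∀ x ∈ uIcc a b, x ≠ 0 := fun x hx => (ha.trans_le (uIcc_of_le hab.le ▸ hx).1).ne'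
  have hparts := intervalIntegral.integral_mul_deriv_eq_deriv_mul
    (fun x hx => (Real.hasDerivAt_log (hne x hx)).sub_const ((Real.log a + Real.log b) / 2))
    (fun x hx => hf x (uIcc_of_le hab.le ▸ hx))
    ((continuousOn_inv₀.mono hne).intervalIntegrable) hf'
  rw [hparts, intervalIntegral.integral_congr fun x _ => (div_eq_inv_mul (f x) x).symm]
  field_simp
  ring

lemma abs_integral_mul_le_setIntegral_abs_mul_mul_inv {φ g : ℝ → ℝ} {a b : ℝ} (ha : 0 < a)
    (hab : a ≤ b) :
    |∫ x in a..b, φ x * g x| ≤ ∫ x in Ioc a b, |φ x| * (x * |g x|) * x⁻¹ := by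
  refine (intervalIntegral.abs_integral_le_integral_abs hab).trans_eq ?_
  rw [intervalIntegral.integral_of_le hab]
  refine setIntegral_congr_fun measurableSet_Ioc fun x hx => ?_
  rw [abs_mul]
  field_simp [(ha.trans hx.1).ne']

lemma integrableOn_abs_log_sub_rpow_mul_inv {a b c p : ℝ} (ha : 0 < a) (hp : 0 ≤ p) :
    IntegrableOn (fun x => |Real.log x - c| ^ p * x⁻¹) (Ioc a b) := by
  have hne : ∀ x ∈ Icc a b, x ≠ 0 := fun x hx => (ha.trans_le hx.1).ne'
  exact (((((Real.continuousOn_log.mono hne).sub continuousOn_const).abs.rpow_const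
    fun _ _ => Or.inr hp).mul (continuousOn_inv₀.mono hne)).integrableOn_Icc).mono_set
    Ioc_subset_Icc_self

lemma abs_integral_log_sub_logMid_mul_le_of_pos {f' : ℝ → ℝ} {a b q s : ℝ} (ha : 0 < a)
    (hab : a < b) (hf' : IntegrableOn f' (Ioc a b)) (hq : 1 < q)
    (hs : s ∈ Ioc 0 1) (hconv : SGeometricallyConvexOn s (Icc a b) fun x => |f' x| ^ q)
    (hfa : 1 ≤ |f' a|) (hfb0 : 0 < |f' b|) (hfb : |f' b| ≤ 1) :
    |∫ x in a..b, (Real.log x - (Real.log a + Real.log b) / 2) * f' x|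
      ≤ (((Real.log b - Real.log a) / 2) ^ q.conjExponent *
          ((Real.log b - Real.log a) / (q.conjExponent + 1))) ^ (1 / q.conjExponent) *
        ((Real.log b - Real.log a) * ((|f' a| ^ (1 - s) * (b * |f' b| ^ s)) ^ q *
          g₂ ((a * |f' a| ^ s / (b * |f' b| ^ s)) ^ q))) ^ (1 / q) := by
  set m := (Real.log a + Real.log b) / 2
  set p := q.conjExponent
  have hpq : p.HolderConjugate q := (Real.HolderConjugate.conjExponent hq).symm
  have hq0 : 0 < q := hpq.symm.pos
  have hpos : ∀ x ∈ Ioc a b, 0 < x := fun x hx => ha.trans hx.1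
  have hmeas : MeasurableSet (Ioc a b) := measurableSet_Ioc
  have hholder := integral_mul_mul_le_Lp_mul_Lq_of_nonneg_weight hpq
    (μ := volume.restrict (Ioc a b)) (f := fun x => |Real.log x - m|)
    (g := fun x => x * |f' x|) (w := fun x => x⁻¹)
    (Filter.Eventually.of_forall fun x => abs_nonneg _)
    ((ae_restrict_iff' hmeas).2 (Filter.Eventually.of_forall fun x hx =>
      mul_nonneg (hpos x hx).le (abs_nonneg _)))
    ((ae_restrict_iff' hmeas).2 (Filter.Eventually.of_forall fun x hx =>
      inv_nonneg.2 (hpos x hx).le))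
    ((Real.measurable_log.sub_const m).abs.aestronglyMeasurable)
    (measurable_id.aestronglyMeasurable.mul hf'.aestronglyMeasurable.norm)
    measurable_inv.aestronglyMeasurable
    (integrableOn_abs_log_sub_rpow_mul_inv ha hpq.nonneg)
    (hconv.integrableOn_rpow_mul_inv ha hab hq0 hs (fun _ _ => abs_nonneg _) hfa hfb0 hfb
      hf'.aestronglyMeasurable.norm)
  have hI1 : ∫ x in Ioc a b, |Real.log x - m| ^ p * x⁻¹
      = ((Real.log b - Real.log a) / 2) ^ p * ((Real.log b - Real.log a) / (p + 1)) := by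
    rw [← intervalIntegral.integral_of_le hab.le]
    exact integral_abs_log_sub_logMid_rpow_mul_inv ha hab hpq.nonneg
  rw [hI1] at hholder
  have hL : 0 < Real.log b - Real.log a := sub_pos.2 (Real.log_lt_log ha hab)
  have hI1_nonneg : 0 ≤ (((Real.log b - Real.log a) / 2) ^ p *
      ((Real.log b - Real.log a) / (p + 1))) ^ (1 / p) :=
    Real.rpow_nonneg (mul_nonneg (Real.rpow_nonneg (half_pos hL).le _)
      (div_pos hL (by linarith [hpq.pos])).le) _
  have hI2 := hconv.setIntegral_rpow_mul_inv_le ha hab hq0 hs (fun _ _ => abs_nonneg _) hfa hfb0 hfb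
  have hI2_nonneg : 0 ≤ ∫ x in Ioc a b, (x * |f' x|) ^ q * x⁻¹ :=
    setIntegral_nonneg hmeas fun x hx => by have := hpos x hx; positivity
  exact (abs_integral_mul_le_setIntegral_abs_mul_mul_inv ha hab.le).trans (hholder.trans
    (mul_le_mul_of_nonneg_left (Real.rpow_le_rpow hI2_nonneg hI2 (by positivity)) hI1_nonneg))

lemma one_div_mul_holder_bound_eq {L Z G q : ℝ} (hL : 0 < L) (hZ : 0 ≤ Z) (hG : 0 ≤ G)
    (hq : 1 < q) :
    1 / L * (((L / 2) ^ q.conjExponent * (L / (q.conjExponent + 1))) ^ (1 / q.conjExponent) *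
      (L * (Z ^ q * G)) ^ (1 / q))
      = 1 / 2 * L * ((q - 1) / (2 * q - 1)) ^ (1 - 1 / q) * (Z * G ^ (1 / q)) := by
  set p := q.conjExponent
  have hpq : p.HolderConjugate q := (Real.HolderConjugate.conjExponent hq).symm
  have hinv : 1 / p = 1 - 1 / q := by
    rw [one_div, one_div, ← hpq.inv_add_inv_eq_one]; ring
  have hp1 : L / (p + 1) = L * ((q - 1) / (2 * q - 1)) := by
    simp only [p, Real.conjExponent]
    have : q - 1 ≠ 0 := by linarith
    have : 2 * q - 1 ≠ 0 := by linarith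
    field_simp
    ring
  have hc : 0 ≤ (q - 1) / (2 * q - 1) := div_nonneg (by linarith) (by linarith)
  have hLL : L ^ (1 / p) * L ^ (1 / q) = L := by
    rw [← Real.rpow_add hL, hinv, sub_add_cancel, Real.rpow_one]
  rw [hp1, Real.mul_rpow (Real.rpow_nonneg (half_pos hL).le _) (mul_nonneg hL.le hc),
    ← Real.rpow_mul (half_pos hL).le, mul_one_div_cancel hpq.ne_zero, Real.rpow_one,
    Real.mul_rpow hL.le hc, Real.mul_rpow hL.le (mul_nonneg (Real.rpow_nonneg hZ _) hG),
    Real.mul_rpow (Real.rpow_nonneg hZ _) hG, ← Real.rpow_mul hZ,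
    mul_one_div_cancel hpq.symm.ne_zero, Real.rpow_one, ← hinv]
  calc _ = 1 / L * (L / 2 * (L ^ (1 / p) * L ^ (1 / q)) * ((q - 1) / (2 * q - 1)) ^ (1 / p) *
        (Z * G ^ (1 / q))) := by ring
    _ = _ := by rw [hLL]; field_simp

lemma abs_one_div_mul_integral_log_sub_logMid_mul_le {f' : ℝ → ℝ} {a b q s : ℝ} (ha : 0 < a)
    (hab : a < b) (hf' : IntegrableOn f' (Ioc a b)) (hq : 1 < q) (hs : s ∈ Ioc 0 1)
    (hconv : SGeometricallyConvexOn s (Icc a b) fun x => |f' x| ^ q)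
    (hfa : 1 ≤ |f' a|) (hfb : |f' b| ≤ 1) :
    |1 / (Real.log b - Real.log a) *
      ∫ x in a..b, (Real.log x - (Real.log a + Real.log b) / 2) * f' x|
      ≤ 1 / 2 * (Real.log b - Real.log a) * ((q - 1) / (2 * q - 1)) ^ (1 - 1 / q) *
        (|f' a| ^ (1 - s) * (b * |f' b| ^ s) *
          g₂ ((a * |f' a| ^ s / (b * |f' b| ^ s)) ^ q) ^ (1 / q)) := by
  have hL : 0 < Real.log b - Real.log a := sub_pos.2 (Real.log_lt_log ha hab)
  have hb : 0 < b := ha.trans hab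
  have hq0 : 0 < q := zero_lt_one.trans hq
  rcases (abs_nonneg (f' b)).eq_or_lt with hfb0 | hfb0
  · have hf'0 : ∀ x ∈ Ioc a b, f' x = 0 := fun x hx => abs_eq_zero.1 <|
      (Real.rpow_eq_zero (abs_nonneg _) hq0.ne').1 <|
        hconv.eq_zero_of_right_eq_zero ha hab (fun _ _ => by positivity)
          (by rw [← hfb0, Real.zero_rpow hq0.ne']) hx
    rw [intervalIntegral.integral_of_le hab.le, setIntegral_congr_fun measurableSet_Ioc
      fun x hx => by rw [hf'0 x hx, mul_zero]]
    simp [← hfb0, Real.zero_rpow hs.1.ne']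
  · rw [abs_mul, abs_of_pos (one_div_pos.2 hL), ← one_div_mul_holder_bound_eq hL
      (by positivity) (g₂_nonneg (by positivity)) hq]
    exact mul_le_mul_of_nonneg_left (abs_integral_log_sub_logMid_mul_le_of_pos ha hab hf' hq hs
      hconv hfa hfb0 hfb) (one_div_pos.2 hL).le

theorem stmt_13_general
    (I : Set ℝ) (hI : I.OrdConnected) (hIpos : I ⊆ Set.Ioi (0:ℝ))
    (f f' : ℝ → ℝ)
    (a b : ℝ) (ha : a ∈ interior I) (hb : b ∈ interior I) (hab : a < b)
    (hdiff : ∀ x ∈ interior I, HasDerivAt f (f' x) x)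
    (hint : IntervalIntegrable f' volume a b)
    (q s : ℝ) (hq : 1 < q) (hs : s ∈ Set.Ioc (0:ℝ) 1)
    (hconv : SGeometricallyConvexOn s (Set.Icc a b) (fun x => |f' x| ^ q))
    (hfb : |f' b| ≤ 1) (hfa : 1 ≤ |f' a|) :
    |(f a + f b) / 2 - (1 / (Real.log b - Real.log a)) * ∫ x in a..b, f x / x| ≤
      (1 / 2 : ℝ) * Real.log (b / a) * ((q - 1) / (2 * q - 1)) ^ (1 - 1 / q) *
        (a * |f' a| * (g₂ ((b * |f' b| ^ s / (a * |f' a| ^ s)) ^ (q))) ^ (1 / q)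
         + b * |f' b| ^ s * |f' a| ^ (1 - s) * (g₂ ((a * |f' a| ^ s / (b * |f' b| ^ s)) ^ (q))) ^ (1 / q)) := by
  have ha0 : 0 < a := hIpos (interior_subset ha)
  have hb0 : 0 < b := ha0.trans hab
  have hL : 0 < Real.log b - Real.log a := sub_pos.2 (Real.log_lt_log ha0 hab)
  rw [Real.log_div hb0.ne' ha0.ne', half_add_sub_integral_div_eq ha0 hab
    (fun x hx => hdiff x (hI.interior.out ha hb hx)) hint]
  refine (abs_one_div_mul_integral_log_sub_logMid_mul_le ha0 hab hint.1 hq hs hconv hfa hfb).trans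
    (mul_le_mul_of_nonneg_left ?_ (mul_nonneg (by positivity)
      (Real.rpow_nonneg (div_nonneg (by linarith) (by linarith)) _)))
  have hfirst : 0 ≤ a * |f' a| * g₂ ((b * |f' b| ^ s / (a * |f' a| ^ s)) ^ q) ^ (1 / q) :=
    mul_nonneg (by positivity) (Real.rpow_nonneg (g₂_nonneg (by positivity)) _)
  linarith

theorem stmt_13
    (I : Set ℝ) (hI : I.OrdConnected) (hIpos : I ⊆ Set.Ioi (0:ℝ))
    (f f' : ℝ → ℝ) (hfpos : ∀ x ∈ I, 0 < f x)
    (a b : ℝ) (ha : a ∈ interior I) (hb : b ∈ interior I) (hab : a < b)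
    (hdiff : ∀ x ∈ interior I, HasDerivAt f (f' x) x)
    (hint : IntervalIntegrable f' volume a b)
    (q s : ℝ) (hq : 1 < q) (hs : s ∈ Set.Ioc (0:ℝ) 1)
    (hconv : SGeometricallyConvexOn s (Set.Icc a b) (fun x => |f' x| ^ q))
    (hfb : |f' b| ≤ 1) (hfa : 1 ≤ |f' a|) :
    |(f a + f b) / 2 - (1 / (Real.log b - Real.log a)) * ∫ x in a..b, f x / x| ≤
      (1 / 2 : ℝ) * Real.log (b / a) * ((q - 1) / (2 * q - 1)) ^ (1 - 1 / q) *
        (a * |f' a| * (g₂ ((b * |f' b| ^ s / (a * |f' a| ^ s)) ^ (q))) ^ (1 / q)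
         + b * |f' b| ^ s * |f' a| ^ (1 - s) * (g₂ ((a * |f' a| ^ s / (b * |f' b| ^ s)) ^ (q))) ^ (1 / q)) :=
  stmt_13_general I hI hIpos f f' a b ha hb hab hdiff hint q s hq hs hconv hfb hfa
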